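/- Let A ∈ ℂ^{m×n} and R ∈ ℂ^{r×n} with rank(A) = rank(R) = k, let κ ≥ 1, and let ṽ^(1), …, ṽ^(k) ∈ ℂ^n be vectors spanning the row space of A (the range of A†) such that: (i) |⟨ṽ^(i), ṽ^(j)⟩ − δ_{ij}| ≤ α ≤ 1/(4k) for all i,j; (ii) |⟨ṽ^(i), R†R ṽ^(j)⟩ − δ_{ij}·σ̃_i²| ≤ β for all i,j, where σ̃_i² ≥ 4/(5κ²) for all i and β ≤ 4/(5κ²); and (iii) ‖A†A − R†R‖ ≤ θ. Let Π denote the orthogonal projection onto the row space of A. Then ‖Π − Σ_{ℓ=1}^k (1/σ̃_ℓ²)·ṽ^(ℓ)(ṽ^(ℓ))† A†A‖ ≤ (8k/3)·(βκ² + θκ² + α). -/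

import Mathlib

open Matrix Finset

/-- The continuous linear map on Euclidean spaces induced by a complex matrix. -/
noncomputable def toELin {m n : ℕ} (M : Matrix (Fin m) (Fin n) ℂ) :
    EuclideanSpace ℂ (Fin n) →L[ℂ] EuclideanSpace ℂ (Fin m) :=
  LinearMap.toContinuousLinearMap (Matrix.toEuclideanLin M)

/-- The outer product `v v†` of a vector with itself, as a continuous linear map
`x ↦ ⟨v, x⟩ • v`. -/
noncomputable def outer {n : ℕ} (v : EuclideanSpace ℂ (Fin n)) :
    EuclideanSpace ℂ (Fin n) →L[ℂ] EuclideanSpace ℂ (Fin n) :=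
  (ContinuousLinearMap.toSpanSingleton ℂ v).comp (innerSL ℂ v)

lemma toELin_mul_apply {m n p : ℕ} (M : Matrix (Fin m) (Fin n) ℂ) (N : Matrix (Fin n) (Fin p) ℂ)
    (x : EuclideanSpace ℂ (Fin p)) : toELin (M * N) x = toELin M (toELin N x) := by
  simp [toELin, Matrix.toEuclideanLin_apply, Matrix.mulVec_mulVec]

lemma toELin_sub_apply {m n : ℕ} (M N : Matrix (Fin m) (Fin n) ℂ)
    (x : EuclideanSpace ℂ (Fin n)) : toELin (M - N) x = toELin M x - toELin N x := by
  simp [toELin, map_sub]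

lemma outer_apply {n : ℕ} (v w : EuclideanSpace ℂ (Fin n)) :
    outer v w = (inner ℂ v w : ℂ) • v := by
  rw [outer, ContinuousLinearMap.comp_apply, ContinuousLinearMap.toSpanSingleton_apply,
    innerSL_apply_apply]

lemma vanish {m n : ℕ} (A : Matrix (Fin m) (Fin n) ℂ) (x : EuclideanSpace ℂ (Fin n))
    (hx : x ∈ (LinearMap.range (toELin Aᴴ).toLinearMap)ᗮ) : toELin (Aᴴ * A) x = 0 := by
  have hAx : toELin A x = 0 := by
    have h0 : (inner ℂ (toELin A x) (toELin A x) : ℂ) = 0 := by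
      have hadj : (inner ℂ (toELin Aᴴ (toELin A x)) x : ℂ) = inner ℂ (toELin A x) (toELin A x) := by
        simp only [toELin, LinearMap.coe_toContinuousLinearMap']
        rw [Matrix.toEuclideanLin_conjTranspose_eq_adjoint]
        exact LinearMap.adjoint_inner_left _ _ _
      rw [← hadj]
      exact (Submodule.mem_orthogonal _ x).mp hx _ ⟨toELin A x, rfl⟩
    exact inner_self_eq_zero.mp h0
  rw [toELin_mul_apply, hAx, map_zero]

lemma gram_est {n k : ℕ} (v : Fin k → EuclideanSpace ℂ (Fin n)) {α : ℝ}
    (hα : ∀ i j, ‖(inner ℂ (v i) (v j) : ℂ) - if i = j then 1 else 0‖ ≤ α)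
    (e : Fin k → ℂ) :
    |‖∑ i, e i • v i‖ ^ 2 - ∑ i, ‖e i‖ ^ 2| ≤ (k : ℝ) * α * ∑ i, ‖e i‖ ^ 2 := by
  have h1 : ((‖∑ i, e i • v i‖ ^ 2 : ℝ) : ℂ) = ∑ i, ∑ j, starRingEnd ℂ (e i) * e j * inner ℂ (v i) (v j) := by
    have hs : ((‖∑ i, e i • v i‖ ^ 2 : ℝ) : ℂ) = inner ℂ (∑ i, e i • v i) (∑ i, e i • v i) := by
      rw [inner_self_eq_norm_sq_to_K]; norm_cast
    calc ((‖∑ i, e i • v i‖ ^ 2 : ℝ) : ℂ)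
        = ∑ j, ∑ i, starRingEnd ℂ (e i) * e j * inner ℂ (v i) (v j) := by
          rw [hs, inner_sum]
          congr 1; ext j
          rw [sum_inner]
          congr 1; ext i
          rw [inner_smul_left, inner_smul_right]; ring
      _ = ∑ i, ∑ j, starRingEnd ℂ (e i) * e j * inner ℂ (v i) (v j) := Finset.sum_comm
  have h2 : ((∑ i, ‖e i‖ ^ 2 : ℝ) : ℂ) = ∑ i, ∑ j, starRingEnd ℂ (e i) * e j * (if i = j then 1 else 0) := by
    push_cast
    rw [Finset.sum_congr rfl (fun i _ => Finset.sum_eq_single i (by intro j _ hj; simp [Ne.symm hj]) (by simp))]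
    congr 1; ext i
    rw [if_pos rfl, mul_one, RCLike.conj_mul]
    norm_cast
  have key : ‖((‖∑ i, e i • v i‖ ^ 2 : ℝ) : ℂ) - ((∑ i, ‖e i‖ ^ 2 : ℝ) : ℂ)‖ ≤ (k:ℝ) * α * ∑ i, ‖e i‖ ^ 2 := by
    rw [h1, h2, ← Finset.sum_sub_distrib]
    simp_rw [← Finset.sum_sub_distrib, ← mul_sub]
    calc ‖∑ i, ∑ j, starRingEnd ℂ (e i) * e j * ((inner ℂ (v i) (v j) : ℂ) - if i = j then 1 else 0)‖
        ≤ ∑ i, ∑ j, ‖starRingEnd ℂ (e i) * e j * ((inner ℂ (v i) (v j) : ℂ) - if i = j then 1 else 0)‖ :=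
          (norm_sum_le _ _).trans (Finset.sum_le_sum fun i _ => norm_sum_le _ _)
      _ ≤ ∑ i, ∑ j, ‖e i‖ * ‖e j‖ * α := by
          refine Finset.sum_le_sum fun i _ => Finset.sum_le_sum fun j _ => ?_
          rw [norm_mul]
          have e1 : ‖starRingEnd ℂ (e i) * e j‖ ≤ ‖e i‖ * ‖e j‖ := by
            rw [norm_mul, Complex.norm_conj]
          exact mul_le_mul e1 (hα i j) (norm_nonneg _) (mul_nonneg (norm_nonneg _) (norm_nonneg _))
      _ = (∑ i, ‖e i‖) ^ 2 * α := by rw [sq, Finset.sum_mul_sum, Finset.sum_mul]; simp [Finset.sum_mul, mul_assoc]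
      _ ≤ ((k : ℝ) * ∑ i, ‖e i‖ ^ 2) * α := by
          rcases Nat.eq_zero_or_pos k with hk | hk
          · subst hk; simp
          · have h0 : (0:ℝ) ≤ α := le_trans (norm_nonneg _) (hα ⟨0, hk⟩ ⟨0, hk⟩)
            gcongr
            simpa using sq_sum_le_card_mul_sum_sq (s := Finset.univ) (f := fun i => ‖e i‖)
      _ = (k:ℝ) * α * ∑ i, ‖e i‖ ^ 2 := by ring
  rw [← Complex.ofReal_sub, Complex.norm_real, Real.norm_eq_abs] at key
  exact key

set_option maxHeartbeats 2000000 in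
/-- Let `A ∈ ℂ^{m×n}`, `R ∈ ℂ^{r×n}` with `rank A = rank R = k`, `κ ≥ 1`,
and let `ṽ⁽¹⁾,…,ṽ⁽ᵏ⁾` span the row space of `A` (the range of `A†`) with
(i) `|⟨ṽ⁽ⁱ⁾, ṽ⁽ʲ⁾⟩ − δᵢⱼ| ≤ α ≤ 1/(4k)`,
(ii) `|⟨ṽ⁽ⁱ⁾, R†R ṽ⁽ʲ⁾⟩ − δᵢⱼ σ̃ᵢ²| ≤ β` where `σ̃ᵢ² ≥ 4/(5κ²)` and `β ≤ 4/(5κ²)`, and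
(iii) `‖A†A − R†R‖ ≤ θ`. If `Π` is the orthogonal projection onto the row space of `A`,
then `‖Π − Σₗ (1/σ̃ₗ²)·ṽ⁽ˡ⁾(ṽ⁽ˡ⁾)† A†A‖ ≤ (8k/3)·(βκ² + θκ² + α)`. -/
theorem stmt_7 {m n r k : ℕ} (A : Matrix (Fin m) (Fin n) ℂ) (R : Matrix (Fin r) (Fin n) ℂ)
    (hA : A.rank = k) (hR : R.rank = k) (κ : ℝ) (hκ : 1 ≤ κ)
    (v : Fin k → EuclideanSpace ℂ (Fin n))
    (hspan : Submodule.span ℂ (Set.range v) = LinearMap.range (toELin Aᴴ).toLinearMap)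
    (α β θ : ℝ) (σ : Fin k → ℝ)
    (hα : ∀ i j, ‖(inner ℂ (v i) (v j) : ℂ) - if i = j then 1 else 0‖ ≤ α)
    (hαk : α ≤ 1 / (4 * k))
    (hβ : ∀ i j, ‖(inner ℂ (v i) (toELin (Rᴴ * R) (v j)) : ℂ) -
        if i = j then ((σ i : ℂ)) ^ 2 else 0‖ ≤ β)
    (hσ : ∀ i, 4 / (5 * κ ^ 2) ≤ (σ i) ^ 2)
    (hβκ : β ≤ 4 / (5 * κ ^ 2))
    (hθ : ‖toELin (Aᴴ * A - Rᴴ * R)‖ ≤ θ) :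
    ‖(LinearMap.range (toELin Aᴴ).toLinearMap).subtypeL.comp
        (Submodule.orthogonalProjectionOnto (LinearMap.range (toELin Aᴴ).toLinearMap)) -
      ∑ ℓ, (((σ ℓ : ℂ)) ^ 2)⁻¹ • (outer (v ℓ)).comp (toELin (Aᴴ * A))‖ ≤
      (8 * k / 3) * (β * κ ^ 2 + θ * κ ^ 2 + α) := by
  set V := LinearMap.range (toELin Aᴴ).toLinearMap with hVdef
  set P : EuclideanSpace ℂ (Fin n) →L[ℂ] EuclideanSpace ℂ (Fin n) :=
    V.subtypeL.comp V.orthogonalProjectionOnto with hPdef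
  set T : EuclideanSpace ℂ (Fin n) →L[ℂ] EuclideanSpace ℂ (Fin n) :=
    ∑ ℓ, (((σ ℓ : ℂ)) ^ 2)⁻¹ • (outer (v ℓ)).comp (toELin (Aᴴ * A)) with hTdef
  rcases Nat.eq_zero_or_pos k with hk0 | hk
  · -- degenerate case k = 0
    subst hk0
    have hVbot : V = ⊥ := by
      rw [← hspan]
      simp [Set.range_eq_empty]
    have hP0 : ∀ x, P x = 0 := by
      intro x
      have hmem : ((V.orthogonalProjectionOnto x : V) : EuclideanSpace ℂ (Fin n)) ∈ V :=
        SetLike.coe_mem _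
      have h0 : ((V.orthogonalProjectionOnto x : V) : EuclideanSpace ℂ (Fin n)) = 0 :=
        Submodule.mem_bot ℂ |>.mp (hVbot.le hmem)
      rw [hPdef, ContinuousLinearMap.comp_apply, Submodule.subtypeL_apply]
      exact h0
    have hT0 : T = 0 := by
      rw [hTdef, Finset.univ_eq_empty, Finset.sum_empty]
    have hb : ‖P - T‖ ≤ 0 := by
      refine ContinuousLinearMap.opNorm_le_bound _ le_rfl fun x => ?_
      rw [ContinuousLinearMap.sub_apply, hT0, hP0 x]
      simp
    refine le_trans hb ?_
    norm_num
  -- main case k ≥ 1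
  have hk1 : (1:ℝ) ≤ (k:ℝ) := by exact_mod_cast hk
  set i0 : Fin k := ⟨0, hk⟩
  have hα0 : 0 ≤ α := le_trans (norm_nonneg _) (hα i0 i0)
  have hβ0 : 0 ≤ β := le_trans (norm_nonneg _) (hβ i0 i0)
  have hθ0 : 0 ≤ θ := le_trans (norm_nonneg _) hθ
  have hκ0 : (0:ℝ) < κ := lt_of_lt_of_le one_pos hκ
  have hκ2 : (1:ℝ) ≤ κ ^ 2 := by nlinarith
  have hkα : (k:ℝ) * α ≤ 1/4 := by
    have h4k : (0:ℝ) < 4 * k := by positivity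
    calc (k:ℝ) * α ≤ (k:ℝ) * (1 / (4 * k)) := by gcongr
      _ = 1/4 := by field_simp
  have hα14 : α ≤ 1/4 := by nlinarith
  have hσpos : ∀ i, (0:ℝ) < σ i ^ 2 := fun i => lt_of_lt_of_le (by positivity) (hσ i)
  have hσinv : ∀ i, (σ i ^ 2)⁻¹ ≤ 5 * κ ^ 2 / 4 := by
    intro i
    rw [inv_le_comm₀ (hσpos i) (by positivity), inv_div]
    exact hσ i
  have hnv : ∀ i, ‖v i‖ ^ 2 ≤ 1 + α := by
    intro i
    have h := hα i i
    have hs : (inner ℂ (v i) (v i) : ℂ) = ((‖v i‖ ^ 2 : ℝ) : ℂ) := by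
      rw [inner_self_eq_norm_sq_to_K]; norm_cast
    rw [if_pos rfl, hs, show ((‖v i‖ ^ 2 : ℝ) : ℂ) - 1 = ((‖v i‖ ^ 2 - 1 : ℝ) : ℂ) by
      push_cast; ring, Complex.norm_real, Real.norm_eq_abs] at h
    linarith [(abs_le.mp h).2]
  have hvv : ∀ i j, ‖v i‖ * ‖v j‖ ≤ 1 + α := by
    intro i j
    nlinarith [sq_nonneg (‖v i‖ - ‖v j‖), hnv i, hnv j]
  -- entrywise bound for A†A
  set E : ℝ := β + θ * (1 + α) with hEdef
  have hE : ∀ i j, ‖(inner ℂ (v i) (toELin (Aᴴ * A) (v j)) : ℂ) -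
      if i = j then ((σ i : ℂ)) ^ 2 else 0‖ ≤ E := by
    intro i j
    have hsplit : (inner ℂ (v i) (toELin (Aᴴ * A) (v j)) : ℂ) =
        inner ℂ (v i) (toELin (Rᴴ * R) (v j)) + inner ℂ (v i) (toELin (Aᴴ * A - Rᴴ * R) (v j)) := by
      rw [toELin_sub_apply, inner_sub_right]; ring
    rw [hsplit]
    have h2 : ‖(inner ℂ (v i) (toELin (Aᴴ * A - Rᴴ * R) (v j)) : ℂ)‖ ≤ θ * (1 + α) := by
      calc ‖(inner ℂ (v i) (toELin (Aᴴ * A - Rᴴ * R) (v j)) : ℂ)‖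
          ≤ ‖v i‖ * ‖toELin (Aᴴ * A - Rᴴ * R) (v j)‖ := by
            exact norm_inner_le_norm _ _
        _ ≤ ‖v i‖ * (‖toELin (Aᴴ * A - Rᴴ * R)‖ * ‖v j‖) := by
            gcongr; exact ContinuousLinearMap.le_opNorm _ _
        _ ≤ ‖v i‖ * (θ * ‖v j‖) := by gcongr
        _ = θ * (‖v i‖ * ‖v j‖) := by ring
        _ ≤ θ * (1 + α) := by gcongr; exact hvv i j
    have harg : (inner ℂ (v i) (toELin (Rᴴ * R) (v j)) : ℂ) +
        (inner ℂ (v i) (toELin (Aᴴ * A - Rᴴ * R) (v j)) : ℂ) -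
        (if i = j then ((σ i : ℂ)) ^ 2 else 0) =
        ((inner ℂ (v i) (toELin (Rᴴ * R) (v j)) : ℂ) -
          (if i = j then ((σ i : ℂ)) ^ 2 else 0)) +
        (inner ℂ (v i) (toELin (Aᴴ * A - Rᴴ * R) (v j)) : ℂ) := by ring
    rw [harg]
    exact le_trans (norm_add_le _ _) (add_le_add (hβ i j) h2)
  have hE0 : 0 ≤ E := by positivity
  set C : ℝ := (8 * k / 3) * (β * κ ^ 2 + θ * κ ^ 2 + α) with hCdef
  have hC0 : 0 ≤ C := by positivity
  -- core estimate on V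
  have hcore : ∀ y ∈ V, ‖(P - T) y‖ ≤ C * ‖y‖ := by
    intro y hy
    have hy' : y ∈ Submodule.span ℂ (Set.range v) := by rw [hspan]; exact hy
    obtain ⟨c, hc⟩ := (Submodule.mem_span_range_iff_exists_fun ℂ).mp hy' 
    set a : Fin k → Fin k → ℂ := fun ℓ j => (inner ℂ (v ℓ) (toELin (Aᴴ * A) (v j)) : ℂ) with hadef
    set d : Fin k → ℂ := fun ℓ => c ℓ - (((σ ℓ : ℂ)) ^ 2)⁻¹ * ∑ j, a ℓ j * c j with hddef
    have hσC : ∀ ℓ, ((σ ℓ : ℂ)) ^ 2 ≠ 0 := by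
      intro ℓ
      have hne : σ ℓ ≠ 0 := by
        intro h
        have := hσpos ℓ
        rw [h] at this
        simp at this
      exact pow_ne_zero _ (by exact_mod_cast hne)
    -- (P - T) y = ∑ ℓ, d ℓ • v ℓ
    have hPy : P y = y := by
      simp only [hPdef, ContinuousLinearMap.comp_apply, Submodule.subtypeL_apply]
      exact Submodule.starProjection_eq_self_iff.mpr hy
    have hTy : T y = ∑ ℓ, ((((σ ℓ : ℂ)) ^ 2)⁻¹ * ∑ j, a ℓ j * c j) • v ℓ := by
      rw [hTdef, ContinuousLinearMap.sum_apply]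
      congr 1; ext ℓ
      rw [ContinuousLinearMap.smul_apply, ContinuousLinearMap.comp_apply, outer_apply]
      have hin : (inner ℂ (v ℓ) (toELin (Aᴴ * A) y) : ℂ) = ∑ j, a ℓ j * c j := by
        rw [← hc, map_sum, inner_sum]
        congr 1; ext j
        rw [_root_.map_smul, inner_smul_right]
        simp only [hadef]
        ring
      rw [hin, smul_smul]
    have hPT : (P - T) y = ∑ ℓ, d ℓ • v ℓ := by
      rw [ContinuousLinearMap.sub_apply, hPy, hTy, ← hc, ← Finset.sum_sub_distrib]
      congr 1; ext ℓ
      simp only [hddef, sub_smul]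
    -- bound on each |d ℓ|
    have hdb : ∀ ℓ, ‖d ℓ‖ ≤ (5 * κ ^ 2 / 4) * E * ∑ j, ‖c j‖ := by
      intro ℓ
      have hrw : d ℓ = -((((σ ℓ : ℂ)) ^ 2)⁻¹ *
          ∑ j, (a ℓ j - if ℓ = j then ((σ ℓ : ℂ)) ^ 2 else 0) * c j) := by
        have hds : ∑ j, (if ℓ = j then ((σ ℓ : ℂ)) ^ 2 else 0) * c j = ((σ ℓ : ℂ)) ^ 2 * c ℓ := by
          rw [Finset.sum_eq_single ℓ (by intro j _ hj; simp [Ne.symm hj]) (by simp)]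
          simp
        have expand : ∑ j, (a ℓ j - if ℓ = j then ((σ ℓ : ℂ)) ^ 2 else 0) * c j =
            (∑ j, a ℓ j * c j) - ((σ ℓ : ℂ)) ^ 2 * c ℓ := by
          simp_rw [sub_mul]
          rw [Finset.sum_sub_distrib, hds]
        simp only [hddef]
        rw [expand, mul_sub, ← mul_assoc, inv_mul_cancel₀ (hσC ℓ), one_mul]
        ring
      rw [hrw, norm_neg, norm_mul]
      have h1 : ‖(((σ ℓ : ℂ)) ^ 2)⁻¹‖ = (σ ℓ ^ 2)⁻¹ := by
        have : (((σ ℓ : ℂ)) ^ 2)⁻¹ = (((σ ℓ ^ 2)⁻¹ : ℝ) : ℂ) := by push_cast; ring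
        rw [this, Complex.norm_real, Real.norm_eq_abs,
          abs_of_pos (inv_pos.mpr (hσpos ℓ))]
      rw [h1]
      have h2 : ‖∑ j, (a ℓ j - if ℓ = j then ((σ ℓ : ℂ)) ^ 2 else 0) * c j‖ ≤ E * ∑ j, ‖c j‖ := by
        calc ‖∑ j, (a ℓ j - if ℓ = j then ((σ ℓ : ℂ)) ^ 2 else 0) * c j‖
            ≤ ∑ j, ‖(a ℓ j - if ℓ = j then ((σ ℓ : ℂ)) ^ 2 else 0) * c j‖ := norm_sum_le _ _
          _ ≤ ∑ j, E * ‖c j‖ := by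
              refine Finset.sum_le_sum fun j _ => ?_
              rw [norm_mul]
              gcongr
              exact hE ℓ j
          _ = E * ∑ j, ‖c j‖ := by rw [Finset.mul_sum]
      calc (σ ℓ ^ 2)⁻¹ * ‖∑ j, (a ℓ j - if ℓ = j then ((σ ℓ : ℂ)) ^ 2 else 0) * c j‖
          ≤ (5 * κ ^ 2 / 4) * (E * ∑ j, ‖c j‖) := by
            have hnn : (0:ℝ) ≤ ∑ j, ‖c j‖ := Finset.sum_nonneg fun j _ => norm_nonneg _
            exact mul_le_mul (hσinv ℓ) h2 (norm_nonneg _) (by positivity)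
        _ = (5 * κ ^ 2 / 4) * E * ∑ j, ‖c j‖ := by ring
    -- now square bounds
    have hSc2 : (∑ j, ‖c j‖) ^ 2 ≤ (k:ℝ) * ∑ j, ‖c j‖ ^ 2 := by
      simpa using sq_sum_le_card_mul_sum_sq (s := Finset.univ) (f := fun j => ‖c j‖)
    have hgc := gram_est v hα c
    rw [hc] at hgc
    have hgc' : (3/4 : ℝ) * ∑ j, ‖c j‖ ^ 2 ≤ ‖y‖ ^ 2 := by
      have habs := abs_le.mp hgc
      have hsum0 : (0:ℝ) ≤ ∑ j, ‖c j‖ ^ 2 := Finset.sum_nonneg fun j _ => sq_nonneg _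
      nlinarith [habs.1, hkα, hsum0]
    have hgd := gram_est v hα d
    have hdsum : ∑ ℓ, ‖d ℓ‖ ^ 2 ≤ (k:ℝ) * ((5 * κ ^ 2 / 4) * E * ∑ j, ‖c j‖) ^ 2 := by
      calc ∑ ℓ, ‖d ℓ‖ ^ 2 ≤ ∑ _ℓ : Fin k, ((5 * κ ^ 2 / 4) * E * ∑ j, ‖c j‖) ^ 2 := by
            refine Finset.sum_le_sum fun ℓ _ => ?_
            exact pow_le_pow_left₀ (norm_nonneg _) (hdb ℓ) 2
        _ = (k:ℝ) * ((5 * κ ^ 2 / 4) * E * ∑ j, ‖c j‖) ^ 2 := by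
            rw [Finset.sum_const]; simp [mul_comm]
    have hnormPT : ‖(P - T) y‖ ^ 2 ≤ (5/4 : ℝ) * ∑ ℓ, ‖d ℓ‖ ^ 2 := by
      have habs := abs_le.mp hgd
      have hsum0 : (0:ℝ) ≤ ∑ ℓ, ‖d ℓ‖ ^ 2 := Finset.sum_nonneg fun j _ => sq_nonneg _
      rw [hPT]
      nlinarith [habs.2, hkα, hsum0]
    -- combine
    have hfinal2 : ‖(P - T) y‖ ^ 2 ≤ (C * ‖y‖) ^ 2 := by
      set S1 : ℝ := ∑ j, ‖c j‖ with hS1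
      set S2 : ℝ := ∑ j, ‖c j‖ ^ 2 with hS2
      have hS1nn : 0 ≤ S1 := Finset.sum_nonneg fun j _ => norm_nonneg _
      have hS2nn : 0 ≤ S2 := Finset.sum_nonneg fun j _ => sq_nonneg _
      have hEle : E ≤ (5/4) * (β + θ) := by
        rw [hEdef]; nlinarith [hθ0, hα14, hβ0]
      have h1 : ‖(P - T) y‖ ^ 2 ≤ (5/4) * ((k:ℝ) * ((5 * κ ^ 2 / 4) * E * S1) ^ 2) :=
        le_trans hnormPT (mul_le_mul_of_nonneg_left hdsum (by norm_num))
      have h4 : S2 ≤ (4/3) * ‖y‖ ^ 2 := by linarith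
      have h5 : ‖(P - T) y‖ ^ 2 ≤ (125/48) * (k:ℝ) ^ 2 * κ ^ 4 * E ^ 2 * ‖y‖ ^ 2 := by
        calc ‖(P - T) y‖ ^ 2
            ≤ (5/4) * ((k:ℝ) * ((25/16) * κ ^ 4 * E ^ 2 * S1 ^ 2)) := by
              rw [show (25/16 : ℝ) * κ ^ 4 * E ^ 2 * S1 ^ 2 = ((5 * κ ^ 2 / 4) * E * S1) ^ 2 by ring]
              exact h1
          _ ≤ (5/4) * ((k:ℝ) * ((25/16) * κ ^ 4 * E ^ 2 * ((k:ℝ) * S2))) := by gcongr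
          _ ≤ (5/4) * ((k:ℝ) * ((25/16) * κ ^ 4 * E ^ 2 * ((k:ℝ) * ((4/3) * ‖y‖ ^ 2)))) := by gcongr
          _ = (125/48) * (k:ℝ) ^ 2 * κ ^ 4 * E ^ 2 * ‖y‖ ^ 2 := by ring
      have h6 : (125/48 : ℝ) * E ^ 2 ≤ (64/9) * (β + θ) ^ 2 := by
        nlinarith [pow_le_pow_left₀ hE0 hEle 2, sq_nonneg (β + θ)]
      have hX : (0:ℝ) ≤ (k:ℝ) ^ 2 * κ ^ 4 * ‖y‖ ^ 2 := by positivity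
      have h7 : (125/48) * (k:ℝ) ^ 2 * κ ^ 4 * E ^ 2 * ‖y‖ ^ 2 ≤
          (64/9) * (β + θ) ^ 2 * (k:ℝ) ^ 2 * κ ^ 4 * ‖y‖ ^ 2 := by
        have h := mul_le_mul_of_nonneg_left h6 hX
        calc (125/48) * (k:ℝ) ^ 2 * κ ^ 4 * E ^ 2 * ‖y‖ ^ 2
            = (k:ℝ) ^ 2 * κ ^ 4 * ‖y‖ ^ 2 * ((125/48 : ℝ) * E ^ 2) := by ring
          _ ≤ (k:ℝ) ^ 2 * κ ^ 4 * ‖y‖ ^ 2 * ((64/9) * (β + θ) ^ 2) := h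
          _ = (64/9) * (β + θ) ^ 2 * (k:ℝ) ^ 2 * κ ^ 4 * ‖y‖ ^ 2 := by ring
      have hCge : (8 * (k:ℝ) / 3) * (β + θ) * κ ^ 2 ≤ C := by
        rw [hCdef]
        have hα8 : (0:ℝ) ≤ (8 * (k:ℝ) / 3) * α :=
          mul_nonneg (by positivity) hα0
        nlinarith [hα8]
      have h9 : ((8 * (k:ℝ) / 3) * (β + θ) * κ ^ 2) ^ 2 ≤ C ^ 2 :=
        pow_le_pow_left₀ (by positivity) hCge 2
      calc ‖(P - T) y‖ ^ 2
          ≤ (125/48) * (k:ℝ) ^ 2 * κ ^ 4 * E ^ 2 * ‖y‖ ^ 2 := h5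
        _ ≤ (64/9) * (β + θ) ^ 2 * (k:ℝ) ^ 2 * κ ^ 4 * ‖y‖ ^ 2 := h7
        _ = ((8 * (k:ℝ) / 3) * (β + θ) * κ ^ 2) ^ 2 * ‖y‖ ^ 2 := by ring
        _ ≤ C ^ 2 * ‖y‖ ^ 2 := mul_le_mul_of_nonneg_right h9 (sq_nonneg _)
        _ = (C * ‖y‖) ^ 2 := by ring
    exact (abs_le_of_sq_le_sq' hfinal2 (by positivity)).2
  -- assemble the operator norm bound
  refine ContinuousLinearMap.opNorm_le_bound _ hC0 fun x => ?_
  set y : EuclideanSpace ℂ (Fin n) := ((V.orthogonalProjectionOnto x : V) : EuclideanSpace ℂ (Fin n)) with hydef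
  have hyV : y ∈ V := SetLike.coe_mem _
  have hz : x - y ∈ Vᗮ := V.sub_starProjection_mem_orthogonal x
  have hzero : (P - T) (x - y) = 0 := by
    rw [ContinuousLinearMap.sub_apply]
    have hPz : P (x - y) = 0 := by
      simp only [hPdef, ContinuousLinearMap.comp_apply, Submodule.subtypeL_apply]
      rw [Submodule.orthogonalProjectionOnto_apply_of_mem_orthogonal hz]
      rfl
    have hTz : T (x - y) = 0 := by
      rw [hTdef, ContinuousLinearMap.sum_apply]
      refine Finset.sum_eq_zero fun ℓ _ => ?_
      rw [ContinuousLinearMap.smul_apply, ContinuousLinearMap.comp_apply, vanish A _ hz,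
        map_zero, smul_zero]
    rw [hPz, hTz, sub_zero]
  have hx : (P - T) x = (P - T) y := by
    rw [map_sub] at hzero
    exact sub_eq_zero.mp hzero
  have hyx : ‖y‖ ≤ ‖x‖ := by
    calc ‖y‖ = ‖V.orthogonalProjectionOnto x‖ := rfl
      _ ≤ ‖V.orthogonalProjectionOnto‖ * ‖x‖ := ContinuousLinearMap.le_opNorm _ _
      _ ≤ 1 * ‖x‖ := by gcongr; exact Submodule.orthogonalProjectionOnto_norm_le V
      _ = ‖x‖ := one_mul _
  calc ‖(P - T) x‖ = ‖(P - T) y‖ := by rw [hx]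
    _ ≤ C * ‖y‖ := hcore y hyV
    _ ≤ C * ‖x‖ := by gcongr
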